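/- arXiv:2109.01792 — 6 statements merged into one kernel-verified Lean document; each statement's English description precedes it below -/
import Mathlib

section
/- Let Ω ⊂ ℝ_{≥0}^n be a compact nonempty symmetric set and define ‖v‖_Ω = max{⟨v,w⟩ : w ∈ Ω}. Let v ∈ ℤ_{≥0}^n be ordered with v_1 ≤ ⋯ ≤ v_n and v_n ≥ v_1 + 2. Let t be the number of indices i with v_i = v_1 and let T be the number of indices i with v_i = v_n. Define 𝒯(v) by increasing the t-th coordinate of v by 1 and decreasing the (n−T+1)-th coordinate by 1 (i.e. transferring one unit from the largest block to the smallest block). Then ‖𝒯(v)‖_Ω ≤ ‖v‖_Ω. -/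
open Finset

/-- The transfer map does not increase `‖·‖_Ω` for symmetric compact `Ω`. -/
theorem stmt_1 (m : ℕ) (Ω : Set (Fin (m + 1) → ℝ))
    (hcomp : IsCompact Ω) (hne : Ω.Nonempty)
    (hnonneg : ∀ x ∈ Ω, ∀ i, 0 ≤ x i)
    (hsymm : ∀ σ : Equiv.Perm (Fin (m + 1)), ∀ x ∈ Ω, (fun i => x (σ i)) ∈ Ω)
    (v : Fin (m + 1) → ℤ) (hv : Monotone v) (hv0 : ∀ i, 0 ≤ v i)
    (hgap : v 0 + 2 ≤ v (Fin.last m))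
    (t T : ℕ)
    (ht : t = (Finset.univ.filter (fun i => v i = v 0)).card)
    (hT : T = (Finset.univ.filter (fun i => v i = v (Fin.last m))).card)
    (Tv : Fin (m + 1) → ℤ)
    (hTv : Tv = fun i : Fin (m + 1) => if (i : ℕ) = t - 1 then v i + 1
      else if (i : ℕ) = (m + 1) - T then v i - 1 else v i) :
    sSup ((fun w => ∑ i, (Tv i : ℝ) * w i) '' Ω) ≤
      sSup ((fun w => ∑ i, (v i : ℝ) * w i) '' Ω) := by
  -- the lower block
  set S : Finset (Fin (m + 1)) := Finset.univ.filter (fun i => v i = v 0) with hS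
  have hS0 : (0 : Fin (m + 1)) ∈ S := by simp [hS]
  have hSne : S.Nonempty := ⟨0, hS0⟩
  set a : Fin (m + 1) := S.max' hSne with ha
  have haS : a ∈ S := S.max'_mem hSne
  have hva : v a = v 0 := by simpa [hS] using haS
  have hSeq : S = Finset.Iic a := by
    ext i
    simp only [hS, Finset.mem_filter, Finset.mem_univ, true_and, Finset.mem_Iic]
    constructor
    · intro hi; exact S.le_max' i (by simp [hS, hi])
    · intro hi
      have h1 : v i ≤ v 0 := hva ▸ hv hi
      have h2 : v 0 ≤ v i := hv (Fin.zero_le i)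
      omega
  have hta : t = (a : ℕ) + 1 := by rw [ht, hSeq, Fin.card_Iic]
  -- the upper block
  set S' : Finset (Fin (m + 1)) := Finset.univ.filter
    (fun i => v i = v (Fin.last m)) with hS'
  have hS'0 : Fin.last m ∈ S' := by simp [hS']
  have hS'ne : S'.Nonempty := ⟨_, hS'0⟩
  set b : Fin (m + 1) := S'.min' hS'ne with hb
  have hbS : b ∈ S' := S'.min'_mem hS'ne
  have hvb : v b = v (Fin.last m) := by simpa [hS'] using hbS
  have hS'eq : S' = Finset.Ici b := by
    ext i
    simp only [hS', Finset.mem_filter, Finset.mem_univ, true_and, Finset.mem_Ici]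
    constructor
    · intro hi; exact S'.min'_le i (by simp [hS', hi])
    · intro hi
      have h1 : v b ≤ v i := hv hi
      have h2 : v i ≤ v (Fin.last m) := hv (Fin.le_last i)
      omega
  have hTb : T = (m + 1) - (b : ℕ) := by rw [hT, hS'eq, Fin.card_Ici]
  have hbval : (m + 1) - T = (b : ℕ) := by have := b.isLt; omega
  have haval : t - 1 = (a : ℕ) := by omega
  have hab : a ≠ b := by
    intro h; rw [h, hvb] at hva; omega
  have habv : (a : ℕ) ≠ (b : ℕ) := fun h => hab (Fin.ext h)
  -- rewrite Tv sums
  have key : ∀ w : Fin (m + 1) → ℝ,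
      ∑ i, (Tv i : ℝ) * w i = (∑ i, (v i : ℝ) * w i) + (w a - w b) := by
    intro w
    have : ∀ i, (Tv i : ℝ) * w i = (v i : ℝ) * w i
        + ((if i = a then w a else 0) + (if i = b then -(w b) else 0)) := by
      intro i
      rcases eq_or_ne i a with rfl | hia
      · simp [hTv, haval, habv, hab]
        push_cast; ring
      · rcases eq_or_ne i b with rfl | hib
        · have : (b : ℕ) ≠ t - 1 := by rw [haval]; exact fun h => habv h.symm
          simp [hTv, hbval, this, hia]
          push_cast; ring
        · have h1 : (i : ℕ) ≠ t - 1 := by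
            rw [haval]; exact fun h => hia (Fin.ext h)
          have h2 : (i : ℕ) ≠ (m + 1) - T := by
            rw [hbval]; exact fun h => hib (Fin.ext h)
          simp [hTv, h1, h2, hia, hib]
    rw [Finset.sum_congr rfl (fun i _ => this i)]
    rw [Finset.sum_add_distrib, Finset.sum_add_distrib,
      Finset.sum_ite_eq' Finset.univ a, Finset.sum_ite_eq' Finset.univ b]
    simp; ring
  -- bounded above
  have hcont : Continuous (fun w : Fin (m + 1) → ℝ => ∑ i, (v i : ℝ) * w i) := by
    fun_prop
  have hbdd : BddAbove ((fun w => ∑ i, (v i : ℝ) * w i) '' Ω) :=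
    (hcomp.image hcont).bddAbove
  apply csSup_le (hne.image _)
  rintro x ⟨w, hw, rfl⟩
  simp only [key w]
  rcases le_or_gt (w a) (w b) with hcase | hcase
  · have : (∑ i, (v i : ℝ) * w i) + (w a - w b) ≤ ∑ i, (v i : ℝ) * w i := by
      linarith
    exact this.trans (le_csSup hbdd ⟨w, hw, rfl⟩)
  · -- swap a and b
    set σ : Equiv.Perm (Fin (m + 1)) := Equiv.swap a b with hσ
    have hw' : (fun i => w (σ i)) ∈ Ω := hsymm σ w hw
    have hsum : ∑ i, (v i : ℝ) * w (σ i) = ∑ i, (v (σ i) : ℝ) * w i := by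
      have := Equiv.sum_comp σ (fun i => (v (σ i) : ℝ) * w i)
      calc ∑ i, (v i : ℝ) * w (σ i)
          = ∑ i, (v (σ (σ i)) : ℝ) * w (σ i) := by
            refine Finset.sum_congr rfl fun i _ => ?_
            rw [hσ, Equiv.swap_apply_self]
        _ = ∑ i, (v (σ i) : ℝ) * w i := this
    have hswap : ∑ i, (v (σ i) : ℝ) * w i
        = (∑ i, (v i : ℝ) * w i)
          + ((v b : ℝ) - v a) * w a + ((v a : ℝ) - v b) * w b := by
      have : ∀ i, (v (σ i) : ℝ) * w i = (v i : ℝ) * w i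
          + ((if i = a then ((v b : ℝ) - v a) * w a else 0)
            + (if i = b then ((v a : ℝ) - v b) * w b else 0)) := by
        intro i
        rcases eq_or_ne i a with rfl | hia
        · simp [hσ, Equiv.swap_apply_left, hab]; ring
        · rcases eq_or_ne i b with rfl | hib
          · simp [hσ, Equiv.swap_apply_right, hia]; ring
          · simp [hσ, Equiv.swap_apply_of_ne_of_ne hia hib, hia, hib]
      rw [Finset.sum_congr rfl (fun i _ => this i)]
      rw [Finset.sum_add_distrib, Finset.sum_add_distrib,
        Finset.sum_ite_eq' Finset.univ a, Finset.sum_ite_eq' Finset.univ b]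
      simp; ring
    have hd : (2 : ℝ) ≤ (v b : ℝ) - v a := by
      rw [hva, hvb]
      have h2 : ((v 0 : ℤ) : ℝ) + 2 ≤ ((v (Fin.last m) : ℤ) : ℝ) := by
        exact_mod_cast hgap
      linarith
    have hle : (∑ i, (v i : ℝ) * w i) + (w a - w b)
        ≤ ∑ i, (v i : ℝ) * w (σ i) := by
      rw [hsum, hswap]
      nlinarith [hcase, hd]
    exact hle.trans (le_csSup hbdd ⟨_, hw', rfl⟩)
end

section
/- Let Ω ⊂ ℝ_{≥0}^n be a compact nonempty symmetric set and define [v]_Ω = min{⟨v,w⟩ : w ∈ Ω}. For k ∈ ℕ set k' = k + n − 1 and let V̌(k,n) ∈ ℕ^n be the vector whose first (k' mod n) coordinates equal ⌈k'/n⌉ and whose remaining coordinates equal ⌊k'/n⌋. Then max{ [v]_Ω : v ∈ ℕ^n, v_i ≥ 1 for all i, Σ_{i=1}^n v_i = k + n − 1 } = [V̌(k,n)]_Ω. -/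
/-!
Moving one unit of `v` from a coordinate `i` to a coordinate `j` with `v j < v i` cannot
decrease `[v]_Ω = minPairing Ω v`: for `w ∈ Ω` with `w i ≤ w j` this is clear, and otherwise
the point of `Ω` obtained by swapping `w i` and `w j` pairs better with `v`, by the
rearrangement inequality. Any `v` with the same coordinate sum as a balanced vector `u` (all
entries within `1` of each other) is turned into `u` by such moves, each lowering the excess
`∑ (v x - u x)`; so the balanced vector `V̌(k,n)` attains the maximum.
-/

open Finset

section MinPairing

variable {ι : Type*} [Fintype ι]

def pairing (v : ι → ℕ) (w : ι → ℝ) : ℝ :=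
  ∑ i, (v i : ℝ) * w i

noncomputable def minPairing (Ω : Set (ι → ℝ)) (v : ι → ℕ) : ℝ :=
  sInf (pairing v '' Ω)

theorem minPairing_le {Ω : Set (ι → ℝ)} (hΩ : IsCompact Ω) (v : ι → ℕ) {w : ι → ℝ}
    (hw : w ∈ Ω) : minPairing Ω v ≤ pairing v w :=
  csInf_le (hΩ.image (by unfold pairing; fun_prop)).bddBelow ⟨w, hw, rfl⟩

theorem sum_mul_comp_swap [DecidableEq ι] {R : Type*} [CommRing R] (f g : ι → R) (i j : ι) :
    ∑ x, f x * g (Equiv.swap i j x) = ∑ x, f x * g x - (f i - f j) * (g i - g j) := by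
  have h : ∀ x, g (Equiv.swap i j x) =
      g x + (g j - g i) * ((Pi.single i 1 : ι → R) x - (Pi.single j 1 : ι → R) x) := by
    intro x
    rcases eq_or_ne x i with rfl | hxi
    · rcases eq_or_ne x j with rfl | hxj <;> simp [*]
    · rcases eq_or_ne x j with rfl | hxj
      · simp [hxi]
      · simp [Equiv.swap_apply_of_ne_of_ne, hxi, hxj]
  simp only [h, mul_add, mul_sub, sum_add_distrib, sum_sub_distrib]
  simp only [Pi.single_apply, mul_ite, mul_one, mul_zero, sum_ite_eq', mem_univ, if_true]
  ring

theorem exists_lt_of_sum_eq_of_ne {M : Type*} [AddCommMonoid M] [LinearOrder M]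
    [IsOrderedCancelAddMonoid M] {u v : ι → M} (hsum : ∑ i, v i = ∑ i, u i) (hvu : v ≠ u) :
    ∃ i, u i < v i := by
  by_contra! hle
  exact hvu (funext fun i => ((sum_eq_sum_iff_of_le fun i _ => hle i).1 hsum) i (mem_univ i))

variable [DecidableEq ι] {Ω : Set (ι → ℝ)}

theorem pairing_add_single (u : ι → ℕ) (k : ι) (w : ι → ℝ) :
    pairing (u + Pi.single k 1) w = pairing u w + w k := by
  simp [pairing, Pi.single_apply, add_mul, sum_add_distrib]

theorem pairing_comp_swap (u : ι → ℕ) (w : ι → ℝ) (i j : ι) :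
    pairing u (fun x => w (Equiv.swap i j x)) = pairing u w - (u i - u j) * (w i - w j) :=
  sum_mul_comp_swap _ w i j

theorem minPairing_add_single_le (hΩ : IsCompact Ω) (hne : Ω.Nonempty)
    (hsymm : ∀ σ : Equiv.Perm ι, ∀ x ∈ Ω, (fun i => x (σ i)) ∈ Ω)
    {u : ι → ℕ} {i j : ι} (hu : u j ≤ u i) :
    minPairing Ω (u + Pi.single i 1) ≤ minPairing Ω (u + Pi.single j 1) := by
  refine le_csInf (hne.image _) ?_
  rintro _ ⟨w, hw, rfl⟩
  rw [pairing_add_single]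
  rcases le_or_gt (w i) (w j) with hw_le | hw_gt
  · calc minPairing Ω (u + Pi.single i 1) ≤ pairing (u + Pi.single i 1) w :=
          minPairing_le hΩ _ hw
      _ ≤ pairing u w + w j := by rw [pairing_add_single]; linarith
  · have hu' : (u j : ℝ) ≤ u i := by exact_mod_cast hu
    calc minPairing Ω (u + Pi.single i 1)
        ≤ pairing (u + Pi.single i 1) (fun x => w (Equiv.swap i j x)) :=
          minPairing_le hΩ _ (hsymm _ w hw)
      _ = pairing u w - (u i - u j) * (w i - w j) + w j := by
          rw [pairing_add_single, pairing_comp_swap, Equiv.swap_apply_left]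
      _ ≤ pairing u w + w j := by nlinarith

theorem minPairing_le_of_balanced (hΩ : IsCompact Ω) (hne : Ω.Nonempty)
    (hsymm : ∀ σ : Equiv.Perm ι, ∀ x ∈ Ω, (fun i => x (σ i)) ∈ Ω)
    {u : ι → ℕ} (hu : ∀ i j, u j ≤ u i + 1) (v : ι → ℕ) (hsum : ∑ i, v i = ∑ i, u i) :
    minPairing Ω v ≤ minPairing Ω u := by
  induction hd : ∑ x, (v x - u x) using Nat.strong_induction_on generalizing v with
  | _ d ih =>
  rcases eq_or_ne v u with rfl | hvu
  · rfl
  obtain ⟨i, hi⟩ := exists_lt_of_sum_eq_of_ne hsum hvu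
  obtain ⟨j, hj⟩ := exists_lt_of_sum_eq_of_ne hsum.symm hvu.symm
  have hij : i ≠ j := by rintro rfl; omega
  obtain ⟨t, rfl⟩ : ∃ t, v = t + Pi.single i 1 :=
    ⟨v - Pi.single i 1, by
      ext x
      rcases eq_or_ne x i with rfl | hx
      · simp only [Pi.add_apply, Pi.sub_apply, Pi.single_eq_same]; omega
      · simp [hx]⟩
  have hti : u i ≤ t i := by simpa using hi
  have htj : t j + 1 ≤ u j := by simpa [hij.symm] using hj
  have hsum' : ∑ x, (t + Pi.single j 1 : ι → ℕ) x = ∑ x, u x := by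
    rw [← hsum]; simp [sum_add_distrib]
  have hd' : ∑ x, ((t + Pi.single j 1 : ι → ℕ) x - u x) < d := by
    rw [← hd]
    refine sum_lt_sum (fun x _ => ?_) ⟨i, mem_univ i, ?_⟩
    · simp only [Pi.add_apply, Pi.single_apply]; split_ifs <;> subst_vars <;> omega
    · simp only [Pi.add_apply, Pi.single_eq_of_ne hij, Pi.single_eq_same]; omega
  have htij : t j ≤ t i := by have := hu i j; omega
  exact (minPairing_add_single_le hΩ hne hsymm htij).trans (ih _ hd' _ hsum' rfl)

end MinPairing

def balancedVector (n m : ℕ) : Fin n → ℕ :=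
  fun i => if (i : ℕ) < m % n then m / n + 1 else m / n

theorem balancedVector_le_add_one (n m : ℕ) (i j : Fin n) :
    balancedVector n m j ≤ balancedVector n m i + 1 := by
  unfold balancedVector; split_ifs <;> omega

theorem one_le_balancedVector {n m : ℕ} (h : n ≤ m) (i : Fin n) : 1 ≤ balancedVector n m i := by
  have := (Nat.one_le_div_iff i.pos).2 h
  unfold balancedVector; split_ifs <;> omega

theorem sum_balancedVector {n : ℕ} (hn : 0 < n) (m : ℕ) : ∑ i, balancedVector n m i = m := by
  have h : ∀ i : Fin n, balancedVector n m i = m / n + if (i : ℕ) < m % n then 1 else 0 := by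
    intro i; unfold balancedVector; split_ifs <;> rfl
  simp only [h, sum_add_distrib, sum_boole, Fin.card_filter_val_lt, sum_const, card_univ,
    Fintype.card_fin, smul_eq_mul, Nat.cast_id, min_eq_right (Nat.mod_lt m hn).le]
  exact Nat.div_add_mod m n

theorem stmt_3_general (n : ℕ) (hn : 0 < n) (Ω : Set (Fin n → ℝ))
    (hcomp : IsCompact Ω) (hne : Ω.Nonempty)
    (hsymm : ∀ σ : Equiv.Perm (Fin n), ∀ x ∈ Ω, (fun i => x (σ i)) ∈ Ω)
    (k : ℕ) (hk : 1 ≤ k) (k' : ℕ) (hk' : k' = k + n - 1)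
    (V : Fin n → ℕ)
    (hV : V = fun i : Fin n => if (i : ℕ) < k' % n then k' / n + 1 else k' / n) :
    sSup {c : ℝ | ∃ v : Fin n → ℕ, (∀ i, 1 ≤ v i) ∧ (∑ i, v i) = k + n - 1 ∧
        c = sInf ((fun w => ∑ i, (v i : ℝ) * w i) '' Ω)} =
      sInf ((fun w => ∑ i, (V i : ℝ) * w i) '' Ω) := by
  change V = balancedVector n k' at hV
  subst hV
  have hVsum : ∑ i, balancedVector n k' i = k + n - 1 := hk' ▸ sum_balancedVector hn k'
  refine IsGreatest.csSup_eq ⟨⟨_, one_le_balancedVector (by omega), hVsum, rfl⟩, ?_⟩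
  rintro _ ⟨v, -, hv, rfl⟩
  exact minPairing_le_of_balanced hcomp hne hsymm (balancedVector_le_add_one n k') v
    (hv.trans hVsum.symm)

/-- Collapse of the Gutt–Hutchings formula for symmetric concave toric domains:
the maximum of `[v]_Ω` over positive integer vectors of coordinate sum `k + n - 1`
equals `[V̌(k,n)]_Ω` for the balanced vector `V̌(k,n)`. -/
theorem stmt_3 (n : ℕ) (hn : 0 < n) (Ω : Set (Fin n → ℝ))
    (hcomp : IsCompact Ω) (hne : Ω.Nonempty)
    (hnonneg : ∀ x ∈ Ω, ∀ i, 0 ≤ x i)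
    (hsymm : ∀ σ : Equiv.Perm (Fin n), ∀ x ∈ Ω, (fun i => x (σ i)) ∈ Ω)
    (k : ℕ) (hk : 1 ≤ k) (k' : ℕ) (hk' : k' = k + n - 1)
    (V : Fin n → ℕ)
    (hV : V = fun i : Fin n => if (i : ℕ) < k' % n then k' / n + 1 else k' / n) :
    sSup {c : ℝ | ∃ v : Fin n → ℕ, (∀ i, 1 ≤ v i) ∧ (∑ i, v i) = k + n - 1 ∧
        c = sInf ((fun w => ∑ i, (v i : ℝ) * w i) '' Ω)} =
      sInf ((fun w => ∑ i, (V i : ℝ) * w i) '' Ω) :=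
  stmt_3_general n hn Ω hcomp hne hsymm k hk k' hk' V hV
end

section
/- Let λ > 0 and let f : [0,λ] → ℝ be continuous, smooth on [0,λ), with f(0) = λ, f'(0) ≤ 0, f'' < 0 on (0,λ), and f⁻¹ = f (f is an involutive decreasing function). Let x(f) be its unique fixed point. Then max_{x ∈ [0,λ]} (x + f(x)) = 2·x(f), and moreover x(f) > λ/2. -/
/-- For `f` in the class `𝒱̂(λ)` (continuous on `[0,λ]`, smooth on `[0,λ)`, `f 0 = λ`,
`f' 0 ≤ 0`, `f'' < 0` on `(0,λ)`, `f⁻¹ = f`) with fixed point `x₀`, the maximum of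
`x + f x` over `[0,λ]` equals `2 x₀`, and `x₀ > λ/2`. -/
theorem stmt_7 (l : ℝ) (hl : 0 < l) (f : ℝ → ℝ)
    (hcont : ContinuousOn f (Set.Icc 0 l))
    (hsmooth : ContDiffOn ℝ (⊤ : ℕ∞) f (Set.Ico 0 l))
    (h0 : f 0 = l)
    (hd0 : deriv f 0 ≤ 0)
    (hconc : ∀ x ∈ Set.Ioo 0 l, deriv (deriv f) x < 0)
    (hmaps : Set.MapsTo f (Set.Icc 0 l) (Set.Icc 0 l))
    (hinv : ∀ x ∈ Set.Icc 0 l, f (f x) = x)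
    (x₀ : ℝ) (hx₀ : x₀ ∈ Set.Ioo 0 l) (hfix : f x₀ = x₀) :
    IsGreatest ((fun x => x + f x) '' Set.Icc 0 l) (2 * x₀) ∧ l / 2 < x₀ := by
  obtain ⟨hx₀0, hx₀l⟩ := hx₀
  have h0mem : (0 : ℝ) ∈ Set.Icc 0 l := ⟨le_refl 0, hl.le⟩
  have hlmem : l ∈ Set.Icc 0 l := ⟨hl.le, le_refl l⟩
  have hx₀mem : x₀ ∈ Set.Icc 0 l := ⟨hx₀0.le, hx₀l.le⟩
  have hfl : f l = 0 := by have := hinv 0 h0mem; rwa [h0] at this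
  -- strict concavity
  have hconcave : StrictConcaveOn ℝ (Set.Icc 0 l) f := by
    apply strictConcaveOn_of_deriv2_neg (convex_Icc 0 l) hcont
    intro x hx
    rw [interior_Icc] at hx
    exact hconc x hx
  -- injectivity
  have hinj : Set.InjOn f (Set.Icc 0 l) := by
    intro a ha b hb hab
    have h1 := hinv a ha
    have h2 := hinv b hb
    rw [hab] at h1
    rw [h1] at h2
    exact h2
  have hanti : StrictAntiOn f (Set.Icc 0 l) := by
    apply ContinuousOn.strictAntiOn_of_injOn_Icc hl.le _ hcont hinj
    rw [h0, hfl]; exact hl.le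
  -- x₀ > l/2
  have hhalf : l / 2 < x₀ := by
    have key := hconcave.2 h0mem hlmem (ne_of_lt hl)
      (show (0:ℝ) < (l - x₀) / l from div_pos (by linarith) hl)
      (show (0:ℝ) < x₀ / l by positivity) (by field_simp; ring)
    have he : ((l - x₀) / l) • (0 : ℝ) + (x₀ / l) • l = x₀ := by
      rw [smul_eq_mul, smul_eq_mul, mul_zero, zero_add]
      field_simp
    rw [he, hfix, h0, hfl, smul_eq_mul, smul_eq_mul] at key
    have hll : (l - x₀) / l * l = l - x₀ := by field_simp
    nlinarith
  refine ⟨⟨⟨x₀, hx₀mem, by show x₀ + f x₀ = 2 * x₀; rw [hfix]; ring⟩, ?_⟩, hhalf⟩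
  rintro v ⟨x, hx, rfl⟩
  show x + f x ≤ 2 * x₀
  rcases eq_or_ne x x₀ with rfl | hne
  · rw [hfix]; linarith
  have hfx : f x ∈ Set.Icc 0 l := hmaps hx
  -- x₀ strictly between x and f x
  have hbet : (x < x₀ ∧ x₀ < f x) ∨ (f x < x₀ ∧ x₀ < x) := by
    rcases lt_or_gt_of_ne hne with h | h
    · left
      refine ⟨h, ?_⟩
      have := hanti hx hx₀mem h
      rwa [hfix] at this
    · right
      refine ⟨?_, h⟩
      have := hanti hx₀mem hx h
      rwa [hfix] at this
  have hd : f x - x ≠ 0 := by rcases hbet with ⟨h1, h2⟩ | ⟨h1, h2⟩ <;> intro hc <;> nlinarith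
  set a := (f x - x₀) / (f x - x) with ha_def
  set b := (x₀ - x) / (f x - x) with hb_def
  have ha : 0 < a := by
    rcases hbet with ⟨h1, h2⟩ | ⟨h1, h2⟩
    · apply div_pos <;> linarith
    · apply div_pos_of_neg_of_neg <;> linarith
  have hb : 0 < b := by
    rcases hbet with ⟨h1, h2⟩ | ⟨h1, h2⟩
    · apply div_pos <;> linarith
    · apply div_pos_of_neg_of_neg <;> linarith
  have hab : a + b = 1 := by rw [ha_def, hb_def]; field_simp; ring
  have hxfx : x ≠ f x := fun hc => by rw [← hc] at hd; simp at hd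
  have key := hconcave.2 hx hfx hxfx ha hb hab
  have he : a • x + b • f x = x₀ := by
    rw [smul_eq_mul, smul_eq_mul, ha_def, hb_def]
    field_simp
    ring
  rw [he, hfix, hinv x hx, smul_eq_mul, smul_eq_mul] at key
  -- key : a * f x + b * x < x₀
  have he' : a * x + b * f x = x₀ := by
    have := he; rwa [smul_eq_mul, smul_eq_mul] at this
  have hsum : x + f x = (a * x + b * f x) + (a * f x + b * x) := by
    linear_combination (x + f x) * hab.symm
  linarith
end

section
/- Let α : [0,2π] → ℝ² be given by α(t) = (2 sin(t/2) − t cos(t/2), 2 sin(t/2) + (2π − t) cos(t/2)). Then min_{t ∈ [0,2π]} ( α_1(t) + α_2(t) ) = 4. Consequently, for every odd k ∈ ℕ, min_{t ∈ [0,2π]} (1/2)⟨(k+1, k+1), α(t)⟩ = 2k + 2. -/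
/-!
Since `α₁ + α₂ = 4 sin (t/2) + (2π - 2t) cos (t/2)`, the substitution `u = t/2 - π/2` turns it
into `4 (cos u + u sin u)` with `|u| ≤ π/2`. There the bounds `cos u ≥ 1 - u²/2` and
`u sin u ≥ (2/π) u²` give `cos u + u sin u ≥ 1 + (2/π - 1/2) u² ≥ 1`, with equality at `u = 0`,
i.e. at `t = π`. The second claim is the first one scaled by `(k + 1) / 2 ≥ 0`.
-/

open Real Set

lemma one_le_cos_add_mul_sin {u : ℝ} (hu : |u| ≤ π / 2) : 1 ≤ cos u + u * sin u := by
  have h_abs : cos u + u * sin u = cos |u| + |u| * sin |u| := by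
    rcases abs_choice u with h | h <;> simp [h, sin_neg]
  set v := |u|
  have hv : 0 ≤ v := abs_nonneg u
  have h_sin : v * (2 / π * v) ≤ v * sin v := mul_le_mul_of_nonneg_left (mul_le_sin hv hu) hv
  have h_coeff : 1 / 2 ≤ 2 / π := by
    rw [div_le_div_iff₀ two_pos pi_pos]
    linarith [pi_le_four]
  nlinarith [one_sub_sq_div_two_le_cos (x := v), mul_le_mul_of_nonneg_left h_coeff (sq_nonneg v)]

lemma four_le_four_mul_sin_add_mul_cos {t : ℝ} (ht : t ∈ Icc 0 (2 * π)) :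
    4 ≤ 4 * sin (t / 2) + (2 * π - 2 * t) * cos (t / 2) := by
  set u := t / 2 - π / 2 with hu_def
  have hu : |u| ≤ π / 2 := abs_le.mpr ⟨by linarith [ht.1], by linarith [ht.2]⟩
  have ht' : t / 2 = u + π / 2 := by ring
  have h_shift : 4 * sin (t / 2) + (2 * π - 2 * t) * cos (t / 2) = 4 * (cos u + u * sin u) := by
    rw [ht', sin_add_pi_div_two, cos_add_pi_div_two]
    ring
  linarith [one_le_cos_add_mul_sin hu]

lemma isLeast_four_mul_sin_add_mul_cos :
    IsLeast ((fun t => 4 * sin (t / 2) + (2 * π - 2 * t) * cos (t / 2)) '' Icc 0 (2 * π)) 4 := by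
  refine ⟨⟨π, ⟨pi_pos.le, by linarith [pi_pos]⟩, by simp⟩, ?_⟩
  rintro _ ⟨t, ht, rfl⟩
  exact four_le_four_mul_sin_add_mul_cos ht

/-- For the boundary curve of the toric model of the Lagrangian bidisk,
`min (α₁ + α₂) = 4`, and hence for odd `k`, `min (1/2)⟨(k+1,k+1), α⟩ = 2k+2`. -/
theorem stmt_10
    (α₁ α₂ : ℝ → ℝ)
    (hα₁ : α₁ = fun t => 2 * sin (t / 2) - t * cos (t / 2))
    (hα₂ : α₂ = fun t => 2 * sin (t / 2) + (2 * π - t) * cos (t / 2)) :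
    IsLeast ((fun t => α₁ t + α₂ t) '' Set.Icc 0 (2 * π)) 4 ∧
    ∀ k : ℕ, Odd k →
      IsLeast
        ((fun t => 1 / 2 * (((k : ℝ) + 1) * α₁ t + ((k : ℝ) + 1) * α₂ t)) ''
          Set.Icc 0 (2 * π))
        (2 * (k : ℝ) + 2) := by
  have h_sum : IsLeast ((fun t => α₁ t + α₂ t) '' Icc 0 (2 * π)) 4 := by
    have h_eq : (fun t => α₁ t + α₂ t) =
        fun t => 4 * sin (t / 2) + (2 * π - 2 * t) * cos (t / 2) := by
      subst hα₁ hα₂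
      funext t; ring
    exact h_eq ▸ isLeast_four_mul_sin_add_mul_cos
  refine ⟨h_sum, fun k _ => ?_⟩
  have h_scaled :=
    (monotone_mul_left_of_nonneg (a := ((k : ℝ) + 1) / 2) (by positivity)).map_isLeast h_sum
  rw [image_image] at h_scaled
  have h_fun : (fun t => 1 / 2 * (((k : ℝ) + 1) * α₁ t + ((k : ℝ) + 1) * α₂ t)) =
      fun t => ((k : ℝ) + 1) / 2 * (α₁ t + α₂ t) := by
    funext t; ring
  rwa [h_fun, show 2 * (k : ℝ) + 2 = ((k : ℝ) + 1) / 2 * 4 by ring]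
end

section
/- Fix real p with 0 < p < 2 and n ≥ 2, and let V ∈ ℝ^n with V_i > 0 for all i. On the set Λ = { (x_1,…,x_{n−1}) ∈ ℝ_{≥0}^{n−1} : x_1^{p/2} + ⋯ + x_{n−1}^{p/2} ≤ 1 }, define F(x) = Σ_{i=1}^{n−1} V_i x_i + V_n (1 − x_1^{p/2} − ⋯ − x_{n−1}^{p/2})^{2/p}. Then min_{x ∈ Λ} F(x) = ( Σ_{i=1}^{n} V_i^{p/(p−2)} )^{(p−2)/p}. -/
open Finset

private lemma aux_lb (p : ℝ) (hp0 : 0 < p) (hp2 : p < 2) (n : ℕ)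
    (V : Fin n → ℝ) (hV : ∀ i, 0 < V i)
    (y : Fin n → ℝ) (hy : ∀ i, 0 ≤ y i) (hy1 : ∑ i, y i = 1) :
    (∑ i, V i ^ (p / (p - 2))) ^ ((p - 2) / p) ≤ ∑ i, V i * y i ^ (2 / p) := by
  have hpne : p ≠ 0 := ne_of_gt hp0
  have hp2ne : p - 2 ≠ 0 := by intro h; nlinarith
  set s : ℝ := p / (p - 2) with hs
  set r : ℝ := 2 / p with hrdef
  have hr1 : (1:ℝ) ≤ r := by
    rw [hrdef, le_div_iff₀ hp0]; linarith
  set S : ℝ := ∑ i, V i ^ s with hS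
  have hSpos : 0 < S := by
    have hne : (Finset.univ : Finset (Fin n)).Nonempty := by
      by_contra h
      rw [Finset.not_nonempty_iff_eq_empty] at h
      rw [h, Finset.sum_empty] at hy1
      norm_num at hy1
    exact Finset.sum_pos (fun i _ => Real.rpow_pos_of_pos (hV i) s) hne
  set w : Fin n → ℝ := fun i => V i ^ s / S with hw
  have hwpos : ∀ i, 0 < w i := fun i => div_pos (Real.rpow_pos_of_pos (hV i) s) hSpos
  have hw1 : ∑ i, w i = 1 := by
    rw [hw, ← Finset.sum_div, ← hS, div_self (ne_of_gt hSpos)]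
  set z : Fin n → ℝ := fun i => y i / w i with hz
  have hznn : ∀ i, 0 ≤ z i := fun i => div_nonneg (hy i) (hwpos i).le
  have h := Real.rpow_arith_mean_le_arith_mean_rpow Finset.univ w z
    (fun i _ => (hwpos i).le) hw1 (fun i _ => hznn i) hr1
  have hwz : ∀ i, w i * z i = y i := fun i => mul_div_cancel₀ _ (ne_of_gt (hwpos i))
  have hL : ∑ i, w i * z i = 1 :=
    (Finset.sum_congr rfl fun i _ => hwz i).trans hy1
  rw [hL, Real.one_rpow] at h
  have hs1r : s * (1 - r) = 1 := by
    rw [hs, hrdef]; field_simp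
  have hw1r : ∀ i, w i ^ (1 - r) = V i / S ^ (1 - r) := by
    intro i
    show (V i ^ s / S) ^ (1 - r) = _
    rw [Real.div_rpow (Real.rpow_pos_of_pos (hV i) s).le hSpos.le,
      ← Real.rpow_mul (hV i).le, hs1r, Real.rpow_one]
  have hterm : ∀ i, w i * z i ^ r = V i * y i ^ r / S ^ (1 - r) := by
    intro i
    have h1 : w i * z i ^ r = w i ^ (1 - r) * y i ^ r := by
      show w i * (y i / w i) ^ r = _
      rw [Real.div_rpow (hy i) (hwpos i).le, Real.rpow_sub (hwpos i), Real.rpow_one]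
      ring
    rw [h1, hw1r]
    ring
  have hR : ∑ i, w i * z i ^ r = (∑ i, V i * y i ^ r) / S ^ (1 - r) := by
    rw [Finset.sum_congr rfl (fun i _ => hterm i), ← Finset.sum_div]
  rw [hR] at h
  have hSr : 0 < S ^ (1 - r) := Real.rpow_pos_of_pos hSpos _
  have := (one_le_div hSr).mp h
  have hexp : (p - 2) / p = 1 - r := by
    rw [hrdef]; field_simp
  rw [hexp]
  exact this

/-- The optimization computing the capacities of the concave symplectic ℓᵖ-sum for
`0 < p < 2`: the minimum of `F` over `Λ` equals `(Σ Vᵢ^{p/(p−2)})^{(p−2)/p}`. -/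
theorem stmt_13 (p : ℝ) (hp0 : 0 < p) (hp2 : p < 2) (m : ℕ) (hm : 1 ≤ m)
    (V : Fin (m + 1) → ℝ) (hV : ∀ i, 0 < V i)
    (Λ : Set (Fin m → ℝ))
    (hΛ : Λ = {x : Fin m → ℝ | (∀ i, 0 ≤ x i) ∧ ∑ i, x i ^ (p / 2) ≤ 1})
    (F : (Fin m → ℝ) → ℝ)
    (hF : F = fun x => (∑ i : Fin m, V i.castSucc * x i) +
      V (Fin.last m) * (1 - ∑ i, x i ^ (p / 2)) ^ (2 / p)) :
    IsLeast (F '' Λ) ((∑ i, V i ^ (p / (p - 2))) ^ ((p - 2) / p)) := by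
  subst hΛ hF
  have hpne : p ≠ 0 := ne_of_gt hp0
  have hp2ne : p - 2 ≠ 0 := by intro h; nlinarith
  have hcomp : ∀ a : ℝ, 0 ≤ a → (a ^ (p / 2)) ^ (2 / p) = a := by
    intro a ha
    rw [← Real.rpow_mul ha]
    rw [show p / 2 * (2 / p) = 1 by field_simp]
    exact Real.rpow_one a
  have hcomp' : ∀ a : ℝ, 0 ≤ a → (a ^ (2 / p)) ^ (p / 2) = a := by
    intro a ha
    rw [← Real.rpow_mul ha]
    rw [show 2 / p * (p / 2) = 1 by field_simp]
    exact Real.rpow_one a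
  set s : ℝ := p / (p - 2) with hs
  set S : ℝ := ∑ i, V i ^ s with hS
  have hSpos : 0 < S :=
    Finset.sum_pos (fun i _ => Real.rpow_pos_of_pos (hV i) s) Finset.univ_nonempty
  constructor
  · -- membership: the minimizer
    refine ⟨fun i => (V i.castSucc ^ s / S) ^ (2 / p), ⟨fun i => Real.rpow_nonneg
      (div_nonneg (Real.rpow_pos_of_pos (hV _) s).le hSpos.le) _, ?_⟩, ?_⟩
    · -- constraint
      have hsum : ∑ i : Fin m, ((V i.castSucc ^ s / S) ^ (2 / p)) ^ (p / 2)
          = (∑ i : Fin m, V i.castSucc ^ s) / S := by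
        rw [Finset.sum_congr rfl (fun i _ => hcomp' _
          (div_nonneg (Real.rpow_pos_of_pos (hV _) s).le hSpos.le)), Finset.sum_div]
      rw [hsum, div_le_one hSpos, hS, Fin.sum_univ_castSucc]
      have := (Real.rpow_pos_of_pos (hV (Fin.last m)) s)
      linarith
    · -- value
      have hsum : ∑ i : Fin m, ((V i.castSucc ^ s / S) ^ (2 / p)) ^ (p / 2)
          = (∑ i : Fin m, V i.castSucc ^ s) / S := by
        rw [Finset.sum_congr rfl (fun i _ => hcomp' _
          (div_nonneg (Real.rpow_pos_of_pos (hV _) s).le hSpos.le)), Finset.sum_div]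
      have hlast : (1 : ℝ) - (∑ i : Fin m, V i.castSucc ^ s) / S
          = V (Fin.last m) ^ s / S := by
        rw [eq_div_iff (ne_of_gt hSpos), sub_mul, one_mul, div_mul_cancel₀ _ (ne_of_gt hSpos)]
        rw [hS, Fin.sum_univ_castSucc]; ring
      have hterm : ∀ i : Fin (m + 1), V i * (V i ^ s / S) ^ (2 / p) = V i ^ s / S ^ (2 / p) := by
        intro i
        rw [Real.div_rpow (Real.rpow_pos_of_pos (hV i) s).le hSpos.le,
          mul_div_assoc']
        congr 1
        have hss : (1 : ℝ) + s * (2 / p) = s := by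
          rw [hs]; field_simp; ring
        calc V i * (V i ^ s) ^ (2 / p) = V i ^ (1 : ℝ) * V i ^ (s * (2 / p)) := by
              rw [Real.rpow_one, ← Real.rpow_mul (hV i).le]
          _ = V i ^ ((1 : ℝ) + s * (2 / p)) := (Real.rpow_add (hV i) _ _).symm
          _ = V i ^ s := by rw [hss]
      simp only [hsum, hlast]
      calc (∑ i : Fin m, V i.castSucc * (V i.castSucc ^ s / S) ^ (2 / p)) +
            V (Fin.last m) * (V (Fin.last m) ^ s / S) ^ (2 / p)
          = ∑ i : Fin (m + 1), V i * (V i ^ s / S) ^ (2 / p) := by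
            rw [Fin.sum_univ_castSucc]
        _ = ∑ i : Fin (m + 1), V i ^ s / S ^ (2 / p) := by
            exact Finset.sum_congr rfl (fun i _ => hterm i)
        _ = S / S ^ (2 / p) := by rw [← Finset.sum_div, ← hS]
        _ = S ^ ((p - 2) / p) := by
            rw [show (p - 2) / p = 1 - 2 / p by rw [sub_div, div_self hpne],
              Real.rpow_sub hSpos, Real.rpow_one]
  · -- lower bound
    rintro t ⟨x, ⟨hx0, hx1⟩, rfl⟩
    set y : Fin (m + 1) → ℝ :=
      Fin.snoc (fun i => x i ^ (p / 2)) (1 - ∑ i, x i ^ (p / 2)) with hy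
    have hynn : ∀ i, 0 ≤ y i := by
      intro i
      refine Fin.lastCases ?_ ?_ i
      · rw [hy, Fin.snoc_last]; linarith
      · intro j; rw [hy, Fin.snoc_castSucc]; exact Real.rpow_nonneg (hx0 j) _
    have hy1 : ∑ i, y i = 1 := by
      rw [Fin.sum_univ_castSucc]
      simp only [hy, Fin.snoc_castSucc, Fin.snoc_last]
      ring
    have key := aux_lb p hp0 hp2 (m + 1) V hV y hynn hy1
    have hFx : (∑ i : Fin m, V i.castSucc * x i) +
        V (Fin.last m) * (1 - ∑ i, x i ^ (p / 2)) ^ (2 / p)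
        = ∑ i : Fin (m + 1), V i * y i ^ (2 / p) := by
      rw [Fin.sum_univ_castSucc]
      simp only [hy, Fin.snoc_castSucc, Fin.snoc_last]
      congr 1
      exact Finset.sum_congr rfl (fun i _ => by rw [hcomp _ (hx0 i)])
    dsimp only
    rw [hFx]
    exact key
end

section
/- Let Ω ⊂ ℝ_{≥0}^n be a compact nonempty symmetric set, and suppose the associated toric domain is convex, i.e. Ω̂ = { x ∈ ℝ^n : (|x_1|,…,|x_n|) ∈ Ω } is convex. Then for every ℓ ∈ ℕ, max{ ℓ(w_1 + ⋯ + w_n) : w ∈ Ω } = ℓ·n·max{ δ ≥ 0 : (δ,δ,…,δ) ∈ Ω }. -/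
open Finset

/-- For a symmetric compact nonempty `Ω ⊂ ℝ_{≥0}^n` whose associated toric domain is
convex, the maximum of `ℓ(w₁ + ⋯ + wₙ)` over `Ω` equals `ℓ·n` times the largest `δ`
with `(δ,…,δ) ∈ Ω`. -/
theorem stmt_18 (n : ℕ) (hn : 0 < n) (Ω : Set (Fin n → ℝ))
    (hcomp : IsCompact Ω) (hne : Ω.Nonempty)
    (hnonneg : ∀ x ∈ Ω, ∀ i, 0 ≤ x i)
    (hsymm : ∀ σ : Equiv.Perm (Fin n), ∀ x ∈ Ω, (fun i => x (σ i)) ∈ Ω)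
    (hconv : Convex ℝ {x : Fin n → ℝ | (fun i => |x i|) ∈ Ω})
    (δ : ℝ) (hδ : IsGreatest {d : ℝ | 0 ≤ d ∧ (fun _ : Fin n => d) ∈ Ω} δ) :
    ∀ ℓ : ℕ, IsGreatest ((fun w => (ℓ : ℝ) * ∑ i, w i) '' Ω) ((ℓ : ℝ) * n * δ) := by
  have : NeZero n := ⟨hn.ne'⟩
  obtain ⟨⟨hδ0, hδΩ⟩, hub⟩ := hδ
  have hn0 : (0:ℝ) < n := by exact_mod_cast hn
  intro ℓ
  constructor
  · exact ⟨fun _ => δ, hδΩ, by simp [Finset.sum_const]; ring⟩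
  · rintro y ⟨w, hw, rfl⟩
    have hwn : ∀ i, 0 ≤ w i := hnonneg w hw
    set s := ∑ i, w i with hs
    have hs0 : 0 ≤ s := Finset.sum_nonneg fun i _ => hwn i
    have key : (fun _ : Fin n => s / n) ∈ Ω := by
      have hmem : ∀ j : Fin n,
          (fun i => w (i + j)) ∈ {x : Fin n → ℝ | (fun i => |x i|) ∈ Ω} := by
        intro j
        have := hsymm (Equiv.addRight j) w hw
        simpa [Set.mem_setOf_eq, abs_of_nonneg (hwn _)] using this
      have hconv' := hconv.sum_mem (t := Finset.univ)
        (w := fun _ : Fin n => (1:ℝ)/n) (fun _ _ => by positivity)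
        (by simp)
        (z := fun j => fun i => w (i + j)) (fun j _ => hmem j)
      have heq : (∑ j : Fin n, ((1:ℝ)/n) • (fun i => w (i + j)))
          = fun _ : Fin n => s / n := by
        funext i
        simp only [Finset.sum_apply, Pi.smul_apply, smul_eq_mul]
        rw [← Finset.mul_sum]
        have : ∑ j : Fin n, w (i + j) = s := by
          rw [hs]
          exact Fintype.sum_equiv (Equiv.addLeft i) _ _ (fun j => rfl)
        rw [this]; ring
      rw [heq] at hconv'
      have habs : (fun i : Fin n => |(fun _ : Fin n => s / n) i|)
          = fun _ : Fin n => s / n := by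
        funext i; simp [abs_of_nonneg (div_nonneg hs0 hn0.le)]
      simpa [Set.mem_setOf_eq, habs] using hconv'
    have hle : s / n ≤ δ := hub ⟨div_nonneg hs0 hn0.le, key⟩
    have hsle : s ≤ n * δ := by
      rw [div_le_iff₀ hn0] at hle; linarith [hle]
    have : (ℓ : ℝ) * s ≤ (ℓ : ℝ) * (n * δ) :=
      mul_le_mul_of_nonneg_left hsle (by positivity)
    simpa [mul_assoc] using this
end
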